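/- arXiv:2207.07356 — 3 statements merged into one kernel-verified Lean document; each statement's English description precedes it below -/
import Mathlib

section
/- Let δ₁, δ₂, ρ₁, ρ₂, k₁, k₂, γ be real constants. Let f : ℝ² → ℝ be smooth and nowhere vanishing and let g, h : ℝ² → ℂ be smooth functions of (x,t) satisfying the three bilinear equations (subscripts denote partial derivatives): (i) g_{xx}·f − 2·g_x·f_x + g·f_{xx} + 2·i·k₁·(g_x·f − g·f_x) − i·(g_t·f − g·f_t) = 0; (ii) h_{xx}·f − 2·h_x·f_x + h·f_{xx} + 2·i·k₂·(h_x·f − h·f_x) − i·(h_t·f − h·f_t) = 0; (iii) 2·(f_{tx}·f − f_t·f_x) − 2·(δ₁ρ₁² + δ₂ρ₂²)·f² = −2·(δ₁ρ₁²·|g|² + δ₂ρ₂²·|h|²). Then the functions A(x,t) = ρ₁·e^{i(k₁x + (γ+k₁²)t)}·g(x,t)/f(x,t), B(x,t) = ρ₂·e^{i(k₂x + (γ+k₂²)t)}·h(x,t)/f(x,t), and L(x,t) = γ − 2·∂²/∂x²( log|f(x,t)| ) satisfy the 2-LSRI model. -/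
open Complex ComplexConjugate

noncomputable section

/-- Partial derivative in the first (space) variable. -/
def pdx {E : Type*} [NormedAddCommGroup E] [NormedSpace ℝ E]
    (u : ℝ → ℝ → E) : ℝ → ℝ → E := fun x t => deriv (fun y => u y t) x

/-- Partial derivative in the second (time) variable. -/
def pdt {E : Type*} [NormedAddCommGroup E] [NormedSpace ℝ E]
    (u : ℝ → ℝ → E) : ℝ → ℝ → E := fun x t => deriv (fun s => u x s) t

/-- The 2-LSRI (two-component long-wave–short-wave resonance interaction) model,
at the point `(x, t)`. -/
def LSRI2At (δ₁ δ₂ : ℝ) (A B : ℝ → ℝ → ℂ) (L : ℝ → ℝ → ℝ) (x t : ℝ) : Prop :=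
  Complex.I * pdt A x t - pdx (pdx A) x t + (L x t : ℂ) * A x t = 0 ∧
  Complex.I * pdt B x t - pdx (pdx B) x t + (L x t : ℂ) * B x t = 0 ∧
  pdt L x t
    = 2 * pdx (fun y s => δ₁ * ‖A y s‖ ^ 2 + δ₂ * ‖B y s‖ ^ 2) x t

/-- The 2-LSRI model (everywhere). -/
def LSRI2 (δ₁ δ₂ : ℝ) (A B : ℝ → ℝ → ℂ) (L : ℝ → ℝ → ℝ) : Prop :=
  ∀ x t : ℝ, LSRI2At δ₁ δ₂ A B L x t

variable {E : Type*} [NormedAddCommGroup E] [NormedSpace ℝ E] {u : ℝ → ℝ → E}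

lemma pdx_hasDerivAt (hu : ContDiff ℝ (⊤ : ℕ∞) (fun v : ℝ × ℝ => u v.1 v.2)) (x t : ℝ) :
    HasDerivAt (fun y => u y t) (pdx u x t) x := by
  have hd : DifferentiableAt ℝ (fun y => u y t) x := by
    have := (hu.differentiable (by simp) (x, t)).comp x
      ((differentiableAt_fun_id.prodMk (differentiableAt_const t)) :
        DifferentiableAt ℝ (fun y : ℝ => (y, t)) x)
    exact this
  exact hd.hasDerivAt

lemma pdt_hasDerivAt (hu : ContDiff ℝ (⊤ : ℕ∞) (fun v : ℝ × ℝ => u v.1 v.2)) (x t : ℝ) :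
    HasDerivAt (fun s => u x s) (pdt u x t) t := by
  have hd : DifferentiableAt ℝ (fun s => u x s) t := by
    have := (hu.differentiable (by simp) (x, t)).comp t
      (((differentiableAt_const x).prodMk differentiableAt_fun_id) :
        DifferentiableAt ℝ (fun s : ℝ => (x, s)) t)
    exact this
  exact hd.hasDerivAt

lemma pdx_eq_fderiv (hu : ContDiff ℝ (⊤ : ℕ∞) (fun v : ℝ × ℝ => u v.1 v.2)) (x t : ℝ) :
    pdx u x t = fderiv ℝ (fun v : ℝ × ℝ => u v.1 v.2) (x, t) (1, 0) := by
  have h : HasDerivAt (fun y => u y t)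
      (fderiv ℝ (fun v : ℝ × ℝ => u v.1 v.2) (x, t) (1, 0)) x := by
    have h1 : HasDerivAt (fun y : ℝ => (y, t)) ((1 : ℝ), (0 : ℝ)) x :=
      (hasDerivAt_id x).prodMk (hasDerivAt_const x t)
    exact ((hu.differentiable (by simp) (x, t)).hasFDerivAt).comp_hasDerivAt x h1
  exact h.deriv

lemma pdt_eq_fderiv (hu : ContDiff ℝ (⊤ : ℕ∞) (fun v : ℝ × ℝ => u v.1 v.2)) (x t : ℝ) :
    pdt u x t = fderiv ℝ (fun v : ℝ × ℝ => u v.1 v.2) (x, t) (0, 1) := by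
  have h : HasDerivAt (fun s => u x s)
      (fderiv ℝ (fun v : ℝ × ℝ => u v.1 v.2) (x, t) (0, 1)) t := by
    have h1 : HasDerivAt (fun s : ℝ => (x, s)) ((0 : ℝ), (1 : ℝ)) t :=
      (hasDerivAt_const t x).prodMk (hasDerivAt_id t)
    exact ((hu.differentiable (by simp) (x, t)).hasFDerivAt).comp_hasDerivAt t h1
  exact h.deriv

lemma pdx_contDiff (hu : ContDiff ℝ (⊤ : ℕ∞) (fun v : ℝ × ℝ => u v.1 v.2)) :
    ContDiff ℝ (⊤ : ℕ∞) (fun v : ℝ × ℝ => pdx u v.1 v.2) := by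
  have h1 : ContDiff ℝ (⊤ : ℕ∞) (fderiv ℝ (fun v : ℝ × ℝ => u v.1 v.2)) :=
    hu.fderiv_right (by simp)
  have h2 : ContDiff ℝ (⊤ : ℕ∞) (fun v : ℝ × ℝ =>
      fderiv ℝ (fun v : ℝ × ℝ => u v.1 v.2) v (1, 0)) := h1.clm_apply contDiff_const
  have : (fun v : ℝ × ℝ => pdx u v.1 v.2) = (fun v : ℝ × ℝ =>
      fderiv ℝ (fun v : ℝ × ℝ => u v.1 v.2) v (1, 0)) := funext fun v => pdx_eq_fderiv hu v.1 v.2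
  rw [this]; exact h2

lemma pdt_contDiff (hu : ContDiff ℝ (⊤ : ℕ∞) (fun v : ℝ × ℝ => u v.1 v.2)) :
    ContDiff ℝ (⊤ : ℕ∞) (fun v : ℝ × ℝ => pdt u v.1 v.2) := by
  have h1 : ContDiff ℝ (⊤ : ℕ∞) (fderiv ℝ (fun v : ℝ × ℝ => u v.1 v.2)) :=
    hu.fderiv_right (by simp)
  have h2 : ContDiff ℝ (⊤ : ℕ∞) (fun v : ℝ × ℝ =>
      fderiv ℝ (fun v : ℝ × ℝ => u v.1 v.2) v (0, 1)) := h1.clm_apply contDiff_const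
  have : (fun v : ℝ × ℝ => pdt u v.1 v.2) = (fun v : ℝ × ℝ =>
      fderiv ℝ (fun v : ℝ × ℝ => u v.1 v.2) v (0, 1)) := funext fun v => pdt_eq_fderiv hu v.1 v.2
  rw [this]; exact h2

lemma pdt_pdx_comm (hu : ContDiff ℝ (⊤ : ℕ∞) (fun v : ℝ × ℝ => u v.1 v.2)) (x t : ℝ) :
    pdt (pdx u) x t = pdx (pdt u) x t := by
  set U : ℝ × ℝ → E := fun v => u v.1 v.2 with hU
  set F' : ℝ × ℝ → (ℝ × ℝ) →L[ℝ] E := fderiv ℝ U with hF'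
  have hF'cd : ContDiff ℝ (⊤ : ℕ∞) F' := hu.fderiv_right (by simp)
  set F'' : (ℝ × ℝ) →L[ℝ] (ℝ × ℝ) →L[ℝ] E := fderiv ℝ F' (x, t) with hF''
  have hF''h : HasFDerivAt F' F'' (x, t) := (hF'cd.differentiable (by simp) (x, t)).hasFDerivAt
  have hsymm : ∀ v w, F'' v w = F'' w v :=
    second_derivative_symmetric (fun y => (hu.differentiable (by simp) y).hasFDerivAt) hF''h
  -- pdt (pdx u) x t = F'' (0,1) (1,0)
  have h1 : pdt (pdx u) x t = F'' (0, 1) (1, 0) := by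
    have heq : (fun s => pdx u x s) = fun s => F' (x, s) (1, 0) := by
      funext s; exact pdx_eq_fderiv hu x s
    have hline : HasDerivAt (fun s : ℝ => (x, s)) ((0 : ℝ), (1 : ℝ)) t :=
      (hasDerivAt_const t x).prodMk (hasDerivAt_id t)
    have hphi : HasFDerivAt (fun p : ℝ × ℝ => F' p (1, 0))
        ((ContinuousLinearMap.apply ℝ E ((1 : ℝ), (0 : ℝ))).comp F'') (x, t) :=
      (ContinuousLinearMap.apply ℝ E ((1 : ℝ), (0 : ℝ))).hasFDerivAt.comp (x, t) hF''h
    have : HasDerivAt (fun s => F' (x, s) (1, 0)) (F'' (0, 1) (1, 0)) t :=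
      hphi.comp_hasDerivAt t hline
    show deriv (fun s => pdx u x s) t = _
    rw [heq]; exact this.deriv
  have h2 : pdx (pdt u) x t = F'' (1, 0) (0, 1) := by
    have heq : (fun y => pdt u y t) = fun y => F' (y, t) (0, 1) := by
      funext y; exact pdt_eq_fderiv hu y t
    have hline : HasDerivAt (fun y : ℝ => (y, t)) ((1 : ℝ), (0 : ℝ)) x :=
      (hasDerivAt_id x).prodMk (hasDerivAt_const x t)
    have hphi : HasFDerivAt (fun p : ℝ × ℝ => F' p (0, 1))
        ((ContinuousLinearMap.apply ℝ E ((0 : ℝ), (1 : ℝ))).comp F'') (x, t) :=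
      (ContinuousLinearMap.apply ℝ E ((0 : ℝ), (1 : ℝ))).hasFDerivAt.comp (x, t) hF''h
    have : HasDerivAt (fun y => F' (y, t) (0, 1)) (F'' (1, 0) (0, 1)) x :=
      by have h' := hphi.comp_hasDerivAt x hline; exact h'
    show deriv (fun y => pdt u y t) x = _
    rw [heq]; exact this.deriv
  rw [h1, h2, hsymm]

lemma schro (ρ k γ : ℝ) (f : ℝ → ℝ → ℝ) (g : ℝ → ℝ → ℂ)
    (hf : ContDiff ℝ (⊤ : ℕ∞) (fun v : ℝ × ℝ => f v.1 v.2))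
    (hg : ContDiff ℝ (⊤ : ℕ∞) (fun v : ℝ × ℝ => g v.1 v.2))
    (hf0 : ∀ x t : ℝ, f x t ≠ 0)
    (bil : ∀ x t : ℝ,
      pdx (pdx g) x t * (f x t : ℂ) - 2 * pdx g x t * ((pdx f x t : ℝ) : ℂ)
        + g x t * ((pdx (pdx f) x t : ℝ) : ℂ)
        + 2 * Complex.I * (k : ℂ) * (pdx g x t * (f x t : ℂ) - g x t * ((pdx f x t : ℝ) : ℂ))
        - Complex.I * (pdt g x t * (f x t : ℂ) - g x t * ((pdt f x t : ℝ) : ℂ)) = 0)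
    (x t : ℝ) :
    Complex.I * pdt (fun x t => (ρ : ℂ) * Complex.exp (Complex.I * ((k * x + (γ + k ^ 2) * t : ℝ) : ℂ))
        * g x t / (f x t : ℂ)) x t
      - pdx (pdx (fun x t => (ρ : ℂ) * Complex.exp (Complex.I * ((k * x + (γ + k ^ 2) * t : ℝ) : ℂ))
        * g x t / (f x t : ℂ))) x t
      + ((γ - 2 * pdx (pdx (fun y s => Real.log |f y s|)) x t : ℝ) : ℂ)
        * ((ρ : ℂ) * Complex.exp (Complex.I * ((k * x + (γ + k ^ 2) * t : ℝ) : ℂ))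
        * g x t / (f x t : ℂ)) = 0 := by
  set A : ℝ → ℝ → ℂ := fun x t =>
    (ρ : ℂ) * Complex.exp (Complex.I * ((k * x + (γ + k ^ 2) * t : ℝ) : ℂ)) * g x t / (f x t : ℂ)
    with hA
  set e : ℝ → ℝ → ℂ := fun y s => Complex.exp (Complex.I * ((k * y + (γ + k ^ 2) * s : ℝ) : ℂ))
    with he
  have hfx : ∀ y s : ℝ, HasDerivAt (fun y' => f y' s) (pdx f y s) y := pdx_hasDerivAt hf
  have hft : ∀ y s : ℝ, HasDerivAt (fun s' => f y s') (pdt f y s) s := pdt_hasDerivAt hf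
  have hfxx : ∀ y s : ℝ, HasDerivAt (fun y' => pdx f y' s) (pdx (pdx f) y s) y :=
    pdx_hasDerivAt (pdx_contDiff hf)
  have hgx : ∀ y s : ℝ, HasDerivAt (fun y' => g y' s) (pdx g y s) y := pdx_hasDerivAt hg
  have hgt : ∀ y s : ℝ, HasDerivAt (fun s' => g y s') (pdt g y s) s := pdt_hasDerivAt hg
  have hgxx : ∀ y s : ℝ, HasDerivAt (fun y' => pdx g y' s) (pdx (pdx g) y s) y :=
    pdx_hasDerivAt (pdx_contDiff hg)
  have hfc : ∀ y s : ℝ, ((f y s : ℝ) : ℂ) ≠ 0 := fun y s => Complex.ofReal_ne_zero.mpr (hf0 y s)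
  have hex : ∀ y s : ℝ, HasDerivAt (fun y' => e y' s) (e y s * (Complex.I * (k : ℂ))) y := by
    intro y s
    have h1 : HasDerivAt (fun y' : ℝ => k * y' + (γ + k ^ 2) * s) k y := by
      simpa using ((hasDerivAt_id y).const_mul k).add_const ((γ + k ^ 2) * s)
    exact (h1.ofReal_comp.const_mul Complex.I).cexp
  have het : ∀ y s : ℝ, HasDerivAt (fun s' => e y s')
      (e y s * (Complex.I * ((γ + k ^ 2 : ℝ) : ℂ))) s := by
    intro y s
    have h1 : HasDerivAt (fun s' : ℝ => k * y + (γ + k ^ 2) * s') (γ + k ^ 2) s := by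
      simpa using (((hasDerivAt_id s).const_mul (γ + k ^ 2)).const_add (k * y))
    exact (h1.ofReal_comp.const_mul Complex.I).cexp
  -- first x-derivative of A
  have hAx : ∀ y s : ℝ, HasDerivAt (fun y' => A y' s)
      ((((ρ : ℂ) * (e y s * (Complex.I * (k : ℂ))) * g y s + (ρ : ℂ) * e y s * pdx g y s)
          * ((f y s : ℝ) : ℂ)
        - (ρ : ℂ) * e y s * g y s * ((pdx f y s : ℝ) : ℂ)) / ((f y s : ℝ) : ℂ) ^ 2) y := by
    intro y s
    exact (((hex y s).const_mul (ρ : ℂ)).mul (hgx y s)).div ((hfx y s).ofReal_comp) (hfc y s)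
  have hpAx : ∀ y s : ℝ, pdx A y s
      = (((ρ : ℂ) * (e y s * (Complex.I * (k : ℂ))) * g y s + (ρ : ℂ) * e y s * pdx g y s)
          * ((f y s : ℝ) : ℂ)
        - (ρ : ℂ) * e y s * g y s * ((pdx f y s : ℝ) : ℂ)) / ((f y s : ℝ) : ℂ) ^ 2 :=
    fun y s => (hAx y s).deriv
  -- second x-derivative
  have ha : HasDerivAt (fun y => (ρ : ℂ) * (e y t * (Complex.I * (k : ℂ))))
      ((ρ : ℂ) * (e x t * (Complex.I * (k : ℂ))) * (Complex.I * (k : ℂ))) x := by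
    have h := ((hex x t).mul_const (Complex.I * (k : ℂ))).const_mul (ρ : ℂ)
    exact h.congr_deriv (by ring)
  have hden : HasDerivAt (fun y => ((f y t : ℝ) : ℂ) ^ 2)
      (((pdx f x t : ℝ) : ℂ) * ((f x t : ℝ) : ℂ) + ((f x t : ℝ) : ℂ) * ((pdx f x t : ℝ) : ℂ)) x := by
    have h := ((hfx x t).ofReal_comp).mul ((hfx x t).ofReal_comp)
    have he2 : (fun y => ((f y t : ℝ) : ℂ) ^ 2) = fun y => ((f y t : ℝ) : ℂ) * ((f y t : ℝ) : ℂ) :=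
      funext fun y => sq _
    rw [he2]; exact h
  have hnum := (((ha.mul (hgx x t)).add (((hex x t).const_mul (ρ : ℂ)).mul (hgxx x t))).mul
      ((hfx x t).ofReal_comp)).sub
    ((((hex x t).const_mul (ρ : ℂ)).mul (hgx x t)).mul ((hfxx x t).ofReal_comp))
  have hAxx : HasDerivAt (fun y =>
      (((ρ : ℂ) * (e y t * (Complex.I * (k : ℂ))) * g y t + (ρ : ℂ) * e y t * pdx g y t)
          * ((f y t : ℝ) : ℂ)
        - (ρ : ℂ) * e y t * g y t * ((pdx f y t : ℝ) : ℂ)) / ((f y t : ℝ) : ℂ) ^ 2) _ x :=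
    hnum.div hden (pow_ne_zero 2 (hfc x t))
  -- time derivative of A
  have hAt : HasDerivAt (fun s => A x s) _ t :=
    (((het x t).const_mul (ρ : ℂ)).mul (hgt x t)).div ((hft x t).ofReal_comp) (hfc x t)
  -- log term
  have hW : pdx (pdx (fun y s => Real.log |f y s|)) x t
      = (pdx (pdx f) x t * f x t - pdx f x t * pdx f x t) / (f x t) ^ 2 := by
    have hw1 : ∀ y s : ℝ, pdx (fun y s => Real.log |f y s|) y s = pdx f y s / f y s := by
      intro y s
      show deriv (fun y' => Real.log |f y' s|) y = _
      have hfe : (fun y' => Real.log |f y' s|) = fun y' => Real.log (f y' s) :=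
        funext fun y' => Real.log_abs _
      rw [hfe]
      exact ((hfx y s).log (hf0 y s)).deriv
    show deriv (fun y => pdx (fun y s => Real.log |f y s|) y t) x = _
    rw [show (fun y => pdx (fun y s => Real.log |f y s|) y t) = fun y => pdx f y t / f y t from
      funext fun y => hw1 y t]
    exact ((hfxx x t).div (hfx x t) (hf0 x t)).deriv
  have h2 : pdx (pdx A) x t = deriv (fun y =>
      (((ρ : ℂ) * (e y t * (Complex.I * (k : ℂ))) * g y t + (ρ : ℂ) * e y t * pdx g y t)
          * ((f y t : ℝ) : ℂ)
        - (ρ : ℂ) * e y t * g y t * ((pdx f y t : ℝ) : ℂ)) / ((f y t : ℝ) : ℂ) ^ 2) x := by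
    show deriv (fun y => pdx A y t) x = _
    rw [show (fun y => pdx A y t) = _ from funext fun y => hpAx y t]
  have h3 : pdt A x t = deriv (fun s => A x s) t := rfl
  rw [hW, h2, hAxx.deriv, h3, hAt.deriv]
  have hB := bil x t
  have hEne : e x t ≠ 0 := Complex.exp_ne_zero _
  have hFne : ((f x t : ℝ) : ℂ) ≠ 0 := hfc x t
  rw [show Complex.exp (Complex.I * ((k * x + (γ + k ^ 2) * t : ℝ) : ℂ)) = e x t from rfl]
  simp only [Pi.mul_apply, Pi.add_apply, Pi.sub_apply]
  push_cast
  field_simp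
  linear_combination (-(ρ : ℂ) * e x t * ((f x t : ℝ) : ℂ)) * hB
    + ((ρ : ℂ) * e x t * (γ : ℂ) * g x t * ((f x t : ℝ) : ℂ) ^ 2) * Complex.I_sq

lemma abs_sq_helper (ρ : ℝ) (z : ℂ) (F r : ℝ) :
    ‖(ρ : ℂ) * Complex.exp (Complex.I * (r : ℂ)) * z / (F : ℂ)‖ ^ 2
      = ρ ^ 2 * ‖z‖ ^ 2 / F ^ 2 := by
  rw [norm_div, norm_mul, norm_mul, Complex.norm_exp, Complex.norm_real, Complex.norm_real]
  simp [Complex.mul_re, Real.exp_zero, div_pow, mul_pow, sq_abs]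

theorem stmt_0 (δ₁ δ₂ ρ₁ ρ₂ k₁ k₂ γ : ℝ)
    (f : ℝ → ℝ → ℝ) (g h : ℝ → ℝ → ℂ)
    (hf : ContDiff ℝ (⊤ : ℕ∞) (fun v : ℝ × ℝ => f v.1 v.2))
    (hg : ContDiff ℝ (⊤ : ℕ∞) (fun v : ℝ × ℝ => g v.1 v.2))
    (hh : ContDiff ℝ (⊤ : ℕ∞) (fun v : ℝ × ℝ => h v.1 v.2))
    (hf0 : ∀ x t : ℝ, f x t ≠ 0)
    (bil1 : ∀ x t : ℝ,
      pdx (pdx g) x t * (f x t : ℂ) - 2 * pdx g x t * ((pdx f x t : ℝ) : ℂ)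
        + g x t * ((pdx (pdx f) x t : ℝ) : ℂ)
        + 2 * Complex.I * (k₁ : ℂ) * (pdx g x t * (f x t : ℂ) - g x t * ((pdx f x t : ℝ) : ℂ))
        - Complex.I * (pdt g x t * (f x t : ℂ) - g x t * ((pdt f x t : ℝ) : ℂ)) = 0)
    (bil2 : ∀ x t : ℝ,
      pdx (pdx h) x t * (f x t : ℂ) - 2 * pdx h x t * ((pdx f x t : ℝ) : ℂ)
        + h x t * ((pdx (pdx f) x t : ℝ) : ℂ)
        + 2 * Complex.I * (k₂ : ℂ) * (pdx h x t * (f x t : ℂ) - h x t * ((pdx f x t : ℝ) : ℂ))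
        - Complex.I * (pdt h x t * (f x t : ℂ) - h x t * ((pdt f x t : ℝ) : ℂ)) = 0)
    (bil3 : ∀ x t : ℝ,
      2 * (pdt (pdx f) x t * f x t - pdt f x t * pdx f x t)
        - 2 * (δ₁ * ρ₁ ^ 2 + δ₂ * ρ₂ ^ 2) * (f x t) ^ 2
        = -2 * (δ₁ * ρ₁ ^ 2 * ‖g x t‖ ^ 2
              + δ₂ * ρ₂ ^ 2 * ‖h x t‖ ^ 2)) :
    LSRI2 δ₁ δ₂
      (fun x t => (ρ₁ : ℂ) * Complex.exp (Complex.I * ((k₁ * x + (γ + k₁ ^ 2) * t : ℝ) : ℂ))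
        * g x t / (f x t : ℂ))
      (fun x t => (ρ₂ : ℂ) * Complex.exp (Complex.I * ((k₂ * x + (γ + k₂ ^ 2) * t : ℝ) : ℂ))
        * h x t / (f x t : ℂ))
      (fun x t => γ - 2 * pdx (pdx (fun y s => Real.log |f y s|)) x t) := by
  intro x t
  refine ⟨schro ρ₁ k₁ γ f g hf hg hf0 bil1 x t, schro ρ₂ k₂ γ f h hf hh hf0 bil2 x t, ?_⟩
  beta_reduce
  set w : ℝ → ℝ → ℝ := fun y s => Real.log |f y s| with hw
  have hfx : ∀ y s : ℝ, HasDerivAt (fun y' => f y' s) (pdx f y s) y := pdx_hasDerivAt hf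
  have hft : ∀ y s : ℝ, HasDerivAt (fun s' => f y s') (pdt f y s) s := pdt_hasDerivAt hf
  have hfxx : ∀ y s : ℝ, HasDerivAt (fun y' => pdx f y' s) (pdx (pdx f) y s) y :=
    pdx_hasDerivAt (pdx_contDiff hf)
  have hwsm : ContDiff ℝ (⊤ : ℕ∞) (fun v : ℝ × ℝ => w v.1 v.2) := by
    have hrw : (fun v : ℝ × ℝ => w v.1 v.2) = fun v : ℝ × ℝ => Real.log (f v.1 v.2) :=
      funext fun v => Real.log_abs _
    rw [hrw]
    exact contDiff_iff_contDiffAt.mpr fun v => (hf.contDiffAt).log (hf0 v.1 v.2)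
  have husm : ContDiff ℝ (⊤ : ℕ∞) (fun v : ℝ × ℝ => pdx w v.1 v.2) := pdx_contDiff hwsm
  have hpw : ∀ y s : ℝ, pdx w y s = pdx f y s / f y s := by
    intro y s
    show deriv (fun y' => w y' s) y = _
    rw [show (fun y' => w y' s) = fun y' => Real.log (f y' s) from
      funext fun y' => Real.log_abs _]
    exact ((hfx y s).log (hf0 y s)).deriv
  -- time derivative of pdx w
  have hptu : ∀ y s : ℝ, pdt (pdx w) y s
      = (δ₁ * ρ₁ ^ 2 + δ₂ * ρ₂ ^ 2)
        - (δ₁ * ρ₁ ^ 2 * ‖g y s‖ ^ 2 + δ₂ * ρ₂ ^ 2 * ‖h y s‖ ^ 2)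
            / (f y s) ^ 2 := by
    intro y s
    show deriv (fun s' => pdx w y s') s = _
    rw [show (fun s' => pdx w y s') = fun s' => pdx f y s' / f y s' from
      funext fun s' => hpw y s']
    have hd : HasDerivAt (fun s' => pdx f y s' / f y s') _ s :=
      (pdt_hasDerivAt (pdx_contDiff hf) y s).div (hft y s) (hf0 y s)
    rw [hd.deriv]
    have hb := bil3 y s
    have hfne := hf0 y s
    field_simp
    linarith [hb]
  -- the left-hand side
  have hL : pdt (fun x t => γ - 2 * pdx (pdx w) x t) x t = -2 * pdt (pdx (pdx w)) x t := by
    show deriv (fun s => γ - 2 * pdx (pdx w) x s) t = _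
    have hd : HasDerivAt (fun s => pdx (pdx w) x s) (pdt (pdx (pdx w)) x t) t :=
      pdt_hasDerivAt (pdx_contDiff husm) x t
    rw [((hd.const_mul (2 : ℝ)).const_sub γ).deriv]
    ring
  have hcomm : pdt (pdx (pdx w)) x t = pdx (pdt (pdx w)) x t := pdt_pdx_comm husm x t
  have h3 : pdx (pdt (pdx w)) x t
      = -deriv (fun y => (δ₁ * ρ₁ ^ 2 * ‖g y t‖ ^ 2
          + δ₂ * ρ₂ ^ 2 * ‖h y t‖ ^ 2) / (f y t) ^ 2) x := by
    show deriv (fun y => pdt (pdx w) y t) x = _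
    rw [show (fun y => pdt (pdx w) y t) = fun y => (δ₁ * ρ₁ ^ 2 + δ₂ * ρ₂ ^ 2)
        - (δ₁ * ρ₁ ^ 2 * ‖g y t‖ ^ 2 + δ₂ * ρ₂ ^ 2 * ‖h y t‖ ^ 2)
            / (f y t) ^ 2 from funext fun y => hptu y t]
    exact deriv_const_sub _
  -- the right-hand side
  have hΦ : (fun y s => δ₁ * ‖(ρ₁ : ℂ)
        * Complex.exp (Complex.I * ((k₁ * y + (γ + k₁ ^ 2) * s : ℝ) : ℂ)) * g y s
        / ((f y s : ℝ) : ℂ)‖ ^ 2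
      + δ₂ * ‖(ρ₂ : ℂ)
        * Complex.exp (Complex.I * ((k₂ * y + (γ + k₂ ^ 2) * s : ℝ) : ℂ)) * h y s
        / ((f y s : ℝ) : ℂ)‖ ^ 2)
      = fun y s => (δ₁ * ρ₁ ^ 2 * ‖g y s‖ ^ 2
          + δ₂ * ρ₂ ^ 2 * ‖h y s‖ ^ 2) / (f y s) ^ 2 := by
    funext y s
    rw [abs_sq_helper, abs_sq_helper]
    field_simp
  rw [hΦ, hL, hcomm, h3]
  show -2 * -deriv (fun y => _) x = 2 * deriv (fun y => _) x
  ring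
end
end

section
/- (Complex conjugacy of the breather tau functions.) Let N ≥ 1 be an integer, k₁, k₂ real constants, and for s = 1,…,N let p_s^{[1]}, p_s^{[2]}, ξ̄_s^{[1]}, ξ̄_s^{[2]} be complex numbers with Re p_s^{[α]} > 0 and p_s^{[α]} ∉ {i k₁, i k₂} for α = 1,2. For (x,t) ∈ ℝ² define ζ_s(x,t) = (p_s^{[1]}−p_s^{[2]})x − i((p_s^{[1]})²−(p_s^{[2]})²)t + ξ̄_s^{[1]} − ξ̄_s^{[2]}, and for every (n,k) ∈ ℤ² define m̄_{s,j}^{(n,k)}(x,t) = Σ_{α,β ∈ {1,2}} [1/(p_s^{[α]} + conj(p_j^{[β]}))]·(−(p_s^{[α]}−ik₁)/(conj(p_j^{[β]})+ik₁))^n·(−(p_s^{[α]}−ik₂)/(conj(p_j^{[β]})+ik₂))^k·E_{αβ}, where E_{11} = e^{ζ_s + conj(ζ_j)}, E_{12} = e^{ζ_s}, E_{21} = e^{conj(ζ_j)}, E_{22} = 1, and τ_{n,k}(x,t) = det( m̄_{s,j}^{(n,k)}(x,t) )_{1≤s,j≤N}. Then for every (n,k) ∈ ℤ², every s, j, and every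 (x,t) ∈ ℝ², conj( m̄_{s,j}^{(n,k)}(x,t) ) = m̄_{j,s}^{(−n,−k)}(x,t); consequently conj( τ_{n,k}(x,t) ) = τ_{−n,−k}(x,t), and in particular τ_{0,0}(x,t) is real. -/
open Complex ComplexConjugate

noncomputable section

/-- The phase `ζ_s(x,t)`. -/
def zetaBr (pc ξc : Fin 2 → ℂ) (x t : ℝ) : ℂ :=
  (pc 0 - pc 1) * (x : ℂ) - Complex.I * ((pc 0) ^ 2 - (pc 1) ^ 2) * (t : ℂ) + ξc 0 - ξc 1

/-- The matrix entry `m̄_{s,j}^{(n,k)}(x,t)` of the breather tau function. -/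
def mbar {N : ℕ} (k₁ k₂ : ℝ) (p ξb : Fin N → Fin 2 → ℂ) (n k : ℤ) (s j : Fin N)
    (x t : ℝ) : ℂ :=
  ∑ α : Fin 2, ∑ β : Fin 2,
    (p s α + conj (p j β))⁻¹
      * (-((p s α - Complex.I * k₁) / (conj (p j β) + Complex.I * k₁))) ^ n
      * (-((p s α - Complex.I * k₂) / (conj (p j β) + Complex.I * k₂))) ^ k
      * Complex.exp ((if α = 0 then zetaBr (p s) (ξb s) x t else 0)
          + (if β = 0 then conj (zetaBr (p j) (ξb j) x t) else 0))

/-- The breather tau function `τ_{n,k}(x,t)`. -/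
def tauBr (N : ℕ) (k₁ k₂ : ℝ) (p ξb : Fin N → Fin 2 → ℂ) (n k : ℤ) (x t : ℝ) : ℂ :=
  Matrix.det (Matrix.of fun s j : Fin N => mbar k₁ k₂ p ξb n k s j x t)

lemma neg_div_zpow_neg (a b : ℂ) (n : ℤ) : (-(a / b)) ^ (-n) = (-(b / a)) ^ n := by
  rw [zpow_neg, ← inv_zpow, inv_neg, inv_div]

theorem stmt_3 (N : ℕ) (hN : 1 ≤ N) (k₁ k₂ : ℝ)
    (p ξb : Fin N → Fin 2 → ℂ)
    (hre : ∀ (s : Fin N) (α : Fin 2), 0 < (p s α).re)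
    (hk1 : ∀ (s : Fin N) (α : Fin 2), p s α ≠ Complex.I * k₁)
    (hk2 : ∀ (s : Fin N) (α : Fin 2), p s α ≠ Complex.I * k₂) :
    (∀ (n k : ℤ) (s j : Fin N) (x t : ℝ),
      conj (mbar k₁ k₂ p ξb n k s j x t) = mbar k₁ k₂ p ξb (-n) (-k) j s x t) ∧
    (∀ (n k : ℤ) (x t : ℝ),
      conj (tauBr N k₁ k₂ p ξb n k x t) = tauBr N k₁ k₂ p ξb (-n) (-k) x t) ∧
    (∀ x t : ℝ, (tauBr N k₁ k₂ p ξb 0 0 x t).im = 0) := by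
  have h1 : ∀ (n k : ℤ) (s j : Fin N) (x t : ℝ),
      conj (mbar k₁ k₂ p ξb n k s j x t) = mbar k₁ k₂ p ξb (-n) (-k) j s x t := by
    intro n k s j x t
    unfold mbar
    rw [map_sum, Finset.sum_comm]
    refine Finset.sum_congr rfl fun β _ => ?_
    rw [map_sum]
    refine Finset.sum_congr rfl fun α _ => ?_
    rw [neg_div_zpow_neg, neg_div_zpow_neg]
    simp only [map_mul, map_inv₀, map_add, map_sub, map_neg, map_div₀, Complex.conj_conj,
      ← Complex.exp_conj, map_zpow₀, apply_ite (starRingEnd ℂ), map_zero, Complex.conj_I,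
      Complex.conj_ofReal]
    rw [add_comm (if α = 0 then zetaBr (p j) (ξb j) x t else 0)]
    ring_nf
  have h2 : ∀ (n k : ℤ) (x t : ℝ),
      conj (tauBr N k₁ k₂ p ξb n k x t) = tauBr N k₁ k₂ p ξb (-n) (-k) x t := by
    intro n k x t
    unfold tauBr
    have hM : (starRingEnd ℂ).mapMatrix (Matrix.of fun s j : Fin N => mbar k₁ k₂ p ξb n k s j x t)
        = Matrix.transpose (Matrix.of fun s j : Fin N => mbar k₁ k₂ p ξb (-n) (-k) s j x t) := by
      ext s j; exact h1 n k s j x t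
    rw [RingHom.map_det, hM, Matrix.det_transpose]
  refine ⟨h1, h2, fun x t => ?_⟩
  have := h2 0 0 x t
  simp only [neg_zero] at this
  exact Complex.conj_eq_iff_im.mp this
end
end

section
/- (From the dimension-reduction condition to the reduced bilinear equation.) Let δ₁, δ₂, ρ₁, ρ₂ be real constants, C ∈ ℂ, and for each (n,k) ∈ ℤ² let τ_{n,k} : ℝ⁴ → ℂ be a smooth function of (x₁, x₂, r, w). Assume that for every (n,k) ∈ ℤ² and every point of ℝ⁴: (a) 2·(∂_{x₁}∂_r τ_{n,k}·τ_{n,k} − ∂_{x₁}τ_{n,k}·∂_r τ_{n,k}) − 2·τ_{n,k}² = −2·τ_{n+1,k}·τ_{n−1,k}; (b) 2·(∂_{x₁}∂_w τ_{n,k}·τ_{n,k} − ∂_{x₁}τ_{n,k}·∂_w τ_{n,k}) − 2·τ_{n,k}² = −2·τ_{n,k+1}·τ_{n,k−1}; (c) δ₁ρ₁²·∂_r τ_{n,k} + δ₂ρ₂²·∂_w τ_{n,k} + i·∂_{x₂} τ_{n,k} = C·τ_{n,k}. Then for every (n,k) ∈ ℤ² and every point of ℝ⁴: −2i·(∂_{x₁}∂_{x₂}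 τ_{n,k}·τ_{n,k} − ∂_{x₁}τ_{n,k}·∂_{x₂}τ_{n,k}) − 2·(δ₁ρ₁² + δ₂ρ₂²)·τ_{n,k}² = −2·(δ₁ρ₁²·τ_{n+1,k}·τ_{n−1,k} + δ₂ρ₂²·τ_{n,k+1}·τ_{n,k−1}). -/
open Complex

noncomputable section

/-- Partial derivative in the first variable `x₁`. -/
def D1 (u : ℝ → ℝ → ℝ → ℝ → ℂ) : ℝ → ℝ → ℝ → ℝ → ℂ :=
  fun x₁ x₂ r w => deriv (fun y => u y x₂ r w) x₁

/-- Partial derivative in the second variable `x₂`. -/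
def D2 (u : ℝ → ℝ → ℝ → ℝ → ℂ) : ℝ → ℝ → ℝ → ℝ → ℂ :=
  fun x₁ x₂ r w => deriv (fun y => u x₁ y r w) x₂

/-- Partial derivative in the third variable `r`. -/
def D3 (u : ℝ → ℝ → ℝ → ℝ → ℂ) : ℝ → ℝ → ℝ → ℝ → ℂ :=
  fun x₁ x₂ r w => deriv (fun y => u x₁ x₂ y w) r

/-- Partial derivative in the fourth variable `w`. -/
def D4 (u : ℝ → ℝ → ℝ → ℝ → ℂ) : ℝ → ℝ → ℝ → ℝ → ℂ :=
  fun x₁ x₂ r w => deriv (fun y => u x₁ x₂ r y) w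

namespace Stmt5Aux

abbrev E4 := ℝ × ℝ × ℝ × ℝ

lemma D2_rep (u : ℝ → ℝ → ℝ → ℝ → ℂ)
    (hF : ContDiff ℝ (⊤ : ℕ∞) (fun v : E4 => u v.1 v.2.1 v.2.2.1 v.2.2.2))
    (x₁ x₂ r w : ℝ) :
    D2 u x₁ x₂ r w
      = fderiv ℝ (fun v : E4 => u v.1 v.2.1 v.2.2.1 v.2.2.2) (x₁, x₂, r, w)
          ((0, 1, 0, 0) : E4) := by
  have hline : HasDerivAt (fun y : ℝ => ((x₁, y, r, w) : E4)) ((0,1,0,0) : E4) x₂ :=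
    HasDerivAt.prodMk (hasDerivAt_const x₂ x₁) (HasDerivAt.prodMk (hasDerivAt_id x₂)
      (HasDerivAt.prodMk (hasDerivAt_const x₂ r) (hasDerivAt_const x₂ w)))
  exact (((hF.differentiable (by simp) (x₁, x₂, r, w)).hasFDerivAt).comp_hasDerivAt x₂ hline).deriv

lemma D3_rep (u : ℝ → ℝ → ℝ → ℝ → ℂ)
    (hF : ContDiff ℝ (⊤ : ℕ∞) (fun v : E4 => u v.1 v.2.1 v.2.2.1 v.2.2.2))
    (x₁ x₂ r w : ℝ) :
    D3 u x₁ x₂ r w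
      = fderiv ℝ (fun v : E4 => u v.1 v.2.1 v.2.2.1 v.2.2.2) (x₁, x₂, r, w)
          ((0, 0, 1, 0) : E4) := by
  have hline : HasDerivAt (fun y : ℝ => ((x₁, x₂, y, w) : E4)) ((0,0,1,0) : E4) r :=
    HasDerivAt.prodMk (hasDerivAt_const r x₁) (HasDerivAt.prodMk (hasDerivAt_const r x₂)
      (HasDerivAt.prodMk (hasDerivAt_id r) (hasDerivAt_const r w)))
  exact (((hF.differentiable (by simp) (x₁, x₂, r, w)).hasFDerivAt).comp_hasDerivAt r hline).deriv

lemma D4_rep (u : ℝ → ℝ → ℝ → ℝ → ℂ)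
    (hF : ContDiff ℝ (⊤ : ℕ∞) (fun v : E4 => u v.1 v.2.1 v.2.2.1 v.2.2.2))
    (x₁ x₂ r w : ℝ) :
    D4 u x₁ x₂ r w
      = fderiv ℝ (fun v : E4 => u v.1 v.2.1 v.2.2.1 v.2.2.2) (x₁, x₂, r, w)
          ((0, 0, 0, 1) : E4) := by
  have hline : HasDerivAt (fun y : ℝ => ((x₁, x₂, r, y) : E4)) ((0,0,0,1) : E4) w :=
    HasDerivAt.prodMk (hasDerivAt_const w x₁) (HasDerivAt.prodMk (hasDerivAt_const w x₂)
      (HasDerivAt.prodMk (hasDerivAt_const w r) (hasDerivAt_id w)))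
  exact (((hF.differentiable (by simp) (x₁, x₂, r, w)).hasFDerivAt).comp_hasDerivAt w hline).deriv

end Stmt5Aux

open Stmt5Aux in
theorem stmt_5 (δ₁ δ₂ ρ₁ ρ₂ : ℝ) (C : ℂ)
    (τ : ℤ → ℤ → ℝ → ℝ → ℝ → ℝ → ℂ)
    (hsm : ∀ n k : ℤ, ContDiff ℝ (⊤ : ℕ∞)
      (fun v : ℝ × ℝ × ℝ × ℝ => τ n k v.1 v.2.1 v.2.2.1 v.2.2.2))
    (ha : ∀ (n k : ℤ) (x₁ x₂ r w : ℝ),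
      2 * (D1 (D3 (τ n k)) x₁ x₂ r w * τ n k x₁ x₂ r w
            - D1 (τ n k) x₁ x₂ r w * D3 (τ n k) x₁ x₂ r w)
        - 2 * (τ n k x₁ x₂ r w) ^ 2
      = -2 * (τ (n + 1) k x₁ x₂ r w * τ (n - 1) k x₁ x₂ r w))
    (hb : ∀ (n k : ℤ) (x₁ x₂ r w : ℝ),
      2 * (D1 (D4 (τ n k)) x₁ x₂ r w * τ n k x₁ x₂ r w
            - D1 (τ n k) x₁ x₂ r w * D4 (τ n k) x₁ x₂ r w)
        - 2 * (τ n k x₁ x₂ r w) ^ 2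
      = -2 * (τ n (k + 1) x₁ x₂ r w * τ n (k - 1) x₁ x₂ r w))
    (hc : ∀ (n k : ℤ) (x₁ x₂ r w : ℝ),
      ((δ₁ * ρ₁ ^ 2 : ℝ) : ℂ) * D3 (τ n k) x₁ x₂ r w
        + ((δ₂ * ρ₂ ^ 2 : ℝ) : ℂ) * D4 (τ n k) x₁ x₂ r w
        + Complex.I * D2 (τ n k) x₁ x₂ r w
      = C * τ n k x₁ x₂ r w) :
    ∀ (n k : ℤ) (x₁ x₂ r w : ℝ),
      -2 * Complex.I * (D1 (D2 (τ n k)) x₁ x₂ r w * τ n k x₁ x₂ r w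
          - D1 (τ n k) x₁ x₂ r w * D2 (τ n k) x₁ x₂ r w)
        - 2 * ((δ₁ * ρ₁ ^ 2 + δ₂ * ρ₂ ^ 2 : ℝ) : ℂ) * (τ n k x₁ x₂ r w) ^ 2
      = -2 * (((δ₁ * ρ₁ ^ 2 : ℝ) : ℂ) * τ (n + 1) k x₁ x₂ r w * τ (n - 1) k x₁ x₂ r w
            + ((δ₂ * ρ₂ ^ 2 : ℝ) : ℂ) * τ n (k + 1) x₁ x₂ r w * τ n (k - 1) x₁ x₂ r w) := by
  intro n k x₁ x₂ r w
  set a : ℂ := ((δ₁ * ρ₁ ^ 2 : ℝ) : ℂ) with ha'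
  set b : ℂ := ((δ₂ * ρ₂ ^ 2 : ℝ) : ℂ) with hb'
  set F : E4 → ℂ := fun v : E4 => τ n k v.1 v.2.1 v.2.2.1 v.2.2.2 with hFdef
  have hF : ContDiff ℝ (⊤ : ℕ∞) F := hsm n k
  have hdF : Differentiable ℝ F := hF.differentiable (by simp)
  -- line in the first coordinate
  have hline : ∀ y : ℝ, HasDerivAt (fun y : ℝ => ((y, x₂, r, w) : E4)) ((1,0,0,0) : E4) y :=
    fun y => HasDerivAt.prodMk (hasDerivAt_id y) (HasDerivAt.prodMk (hasDerivAt_const y x₂)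
      (HasDerivAt.prodMk (hasDerivAt_const y r) (hasDerivAt_const y w)))
  -- the directional-derivative functions along the first-coordinate line
  set g2 : ℝ → ℂ := fun y => fderiv ℝ F (y, x₂, r, w) ((0,1,0,0) : E4) with hg2def
  set g3 : ℝ → ℂ := fun y => fderiv ℝ F (y, x₂, r, w) ((0,0,1,0) : E4) with hg3def
  set g4 : ℝ → ℂ := fun y => fderiv ℝ F (y, x₂, r, w) ((0,0,0,1) : E4) with hg4def
  have hdir : ∀ v : E4, Differentiable ℝ (fun y : ℝ => fderiv ℝ F (y, x₂, r, w) v) := by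
    intro v
    have h1 : ContDiff ℝ (⊤ : ℕ∞) (fun p : E4 => fderiv ℝ F p v) :=
      (hF.fderiv_right (by simp)).clm_apply contDiff_const
    exact fun y => DifferentiableAt.comp y (h1.differentiable (by simp) _) (hline y).differentiableAt
  have hg2 : Differentiable ℝ g2 := hdir _
  have hg3 : Differentiable ℝ g3 := hdir _
  have hg4 : Differentiable ℝ g4 := hdir _
  -- representations of the partials
  have h2rep : ∀ y, D2 (τ n k) y x₂ r w = g2 y := fun y => D2_rep (τ n k) hF y x₂ r w
  have h3rep : ∀ y, D3 (τ n k) y x₂ r w = g3 y := fun y => D3_rep (τ n k) hF y x₂ r w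
  have h4rep : ∀ y, D4 (τ n k) y x₂ r w = g4 y := fun y => D4_rep (τ n k) hF y x₂ r w
  -- τ along the line
  have hτdiff : Differentiable ℝ (fun y : ℝ => τ n k y x₂ r w) :=
    fun y => DifferentiableAt.comp y (hdF _) (hline y).differentiableAt
  -- the reduction identity along the line
  have heq : (fun y : ℝ => a * g3 y + b * g4 y + Complex.I * g2 y)
      = fun y : ℝ => C * τ n k y x₂ r w := by
    funext y
    rw [← h3rep y, ← h4rep y, ← h2rep y]
    exact hc n k y x₂ r w
  -- differentiate the identity at x₁
  have hL : HasDerivAt (fun y : ℝ => a * g3 y + b * g4 y + Complex.I * g2 y)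
      (a * deriv g3 x₁ + b * deriv g4 x₁ + Complex.I * deriv g2 x₁) x₁ :=
    (((hg3 x₁).hasDerivAt.const_mul a).add ((hg4 x₁).hasDerivAt.const_mul b)).add
      ((hg2 x₁).hasDerivAt.const_mul Complex.I)
  have hR : HasDerivAt (fun y : ℝ => C * τ n k y x₂ r w)
      (C * deriv (fun y : ℝ => τ n k y x₂ r w) x₁) x₁ :=
    (hτdiff x₁).hasDerivAt.const_mul C
  rw [heq] at hL
  have hderiv : a * deriv g3 x₁ + b * deriv g4 x₁ + Complex.I * deriv g2 x₁
      = C * deriv (fun y : ℝ => τ n k y x₂ r w) x₁ := hL.unique hR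
  -- identify D1 (Dᵢ τ) with deriv gᵢ
  have hD1D2 : D1 (D2 (τ n k)) x₁ x₂ r w = deriv g2 x₁ := by
    show deriv (fun y => D2 (τ n k) y x₂ r w) x₁ = _
    rw [funext h2rep]
  have hD1D3 : D1 (D3 (τ n k)) x₁ x₂ r w = deriv g3 x₁ := by
    show deriv (fun y => D3 (τ n k) y x₂ r w) x₁ = _
    rw [funext h3rep]
  have hD1D4 : D1 (D4 (τ n k)) x₁ x₂ r w = deriv g4 x₁ := by
    show deriv (fun y => D4 (τ n k) y x₂ r w) x₁ = _
    rw [funext h4rep]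
  have hD1 : D1 (τ n k) x₁ x₂ r w = deriv (fun y : ℝ => τ n k y x₂ r w) x₁ := rfl
  have hderiv' : a * D1 (D3 (τ n k)) x₁ x₂ r w + b * D1 (D4 (τ n k)) x₁ x₂ r w
      + Complex.I * D1 (D2 (τ n k)) x₁ x₂ r w = C * D1 (τ n k) x₁ x₂ r w := by
    rw [hD1D2, hD1D3, hD1D4, hD1]; exact hderiv
  have hA := ha n k x₁ x₂ r w
  have hB := hb n k x₁ x₂ r w
  have hC := hc n k x₁ x₂ r w
  rw [show ((δ₁ * ρ₁ ^ 2 + δ₂ * ρ₂ ^ 2 : ℝ) : ℂ) = a + b by rw [ha', hb']; push_cast; ring]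
  linear_combination (-2 * τ n k x₁ x₂ r w) * hderiv' + (2 * D1 (τ n k) x₁ x₂ r w) * hC
    + a * hA + b * hB
end
end
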